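/- Pruning semantics: for any lifeline l and interaction terms i, i', if i ⇝_l i' then σ_d(i') = { t ∈ σ_d(i) | ¬(t ⋈ l) }, i.e. the pruned term accepts exactly the traces of i that contain no action on l. -/

import Mathlib

universe u v
variable {A : Type u} {L : Type v}

/-- Trace `t` has a conflict with lifeline `l`: it contains an action occurring on `l`. -/
def Conflict (θ : A → L) (t : List A) (l : L) : Prop := ∃ a ∈ t, θ a = l

/-- `Interl t1 t2 t` : `t` is an interleaving of traces `t1` and `t2`. -/
inductive Interl : List A → List A → List A → Prop
  | nil_left (t : List A) : Interl [] t t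
  | nil_right (t : List A) : Interl t [] t
  | cons_left (a : A) {t1 t2 t : List A} : Interl t1 t2 t → Interl (a :: t1) t2 (a :: t)
  | cons_right (a : A) {t1 t2 t : List A} : Interl t1 t2 t → Interl t1 (a :: t2) (a :: t)

/-- `WeakSeq θ t1 t2 t` : `t` is a weak sequencing of `t1` and `t2`. -/
inductive WeakSeq (θ : A → L) : List A → List A → List A → Prop
  | nil_left (t : List A) : WeakSeq θ [] t t
  | nil_right (t : List A) : WeakSeq θ t [] t
  | cons_left (a : A) {t1 t2 t : List A} : WeakSeq θ t1 t2 t → WeakSeq θ (a :: t1) t2 (a :: t)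
  | cons_right (a : A) {t1 t2 t : List A} : WeakSeq θ t1 t2 t → ¬ Conflict θ t1 (θ a) →
      WeakSeq θ t1 (a :: t2) (a :: t)

/-- Interleaving of sets of traces. -/
def interlS (T1 T2 : Set (List A)) : Set (List A) :=
  {t | ∃ t1 ∈ T1, ∃ t2 ∈ T2, Interl t1 t2 t}

/-- Weak sequencing of sets of traces. -/
def weakS (θ : A → L) (T1 T2 : Set (List A)) : Set (List A) :=
  {t | ∃ t1 ∈ T1, ∃ t2 ∈ T2, WeakSeq θ t1 t2 t}

/-- Strict sequencing (concatenation) of sets of traces. -/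
def concatS (T1 T2 : Set (List A)) : Set (List A) :=
  {t | ∃ t1 ∈ T1, ∃ t2 ∈ T2, t = t1 ++ t2}

/-- Restricted version of a scheduling operator: the first action must come from the left. -/
def restr (op : Set (List A) → Set (List A) → Set (List A)) (T1 T2 : Set (List A)) :
    Set (List A) :=
  {t | t ∈ op T1 T2 ∧ ∀ a t', t = a :: t' → ∃ t1, a :: t1 ∈ T1 ∧ t ∈ op {t1} T2}

/-- Powers of a set of traces w.r.t. a scheduling operator. -/
def power (op : Set (List A) → Set (List A) → Set (List A)) (T : Set (List A)) :
    ℕ → Set (List A)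
  | 0 => {[]}
  | n + 1 => op T (power op T n)

/-- Kleene closure of a set of traces w.r.t. a scheduling operator. -/
def kleene (op : Set (List A) → Set (List A) → Set (List A)) (T : Set (List A)) :
    Set (List A) :=
  ⋃ n, power op T n

/-- Interaction terms. -/
inductive Interaction (A : Type u) : Type u
  | empty : Interaction A
  | act : A → Interaction A
  | strict : Interaction A → Interaction A → Interaction A
  | seq : Interaction A → Interaction A → Interaction A
  | par : Interaction A → Interaction A → Interaction A
  | alt : Interaction A → Interaction A → Interaction A
  | loopX : Interaction A → Interaction A
  | loopH : Interaction A → Interaction A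
  | loopS : Interaction A → Interaction A
  | loopP : Interaction A → Interaction A

/-- Denotational semantics of interactions. -/
def sem (θ : A → L) : Interaction A → Set (List A)
  | .empty => {[]}
  | .act a => {[a]}
  | .strict i1 i2 => concatS (sem θ i1) (sem θ i2)
  | .seq i1 i2 => weakS θ (sem θ i1) (sem θ i2)
  | .par i1 i2 => interlS (sem θ i1) (sem θ i2)
  | .alt i1 i2 => sem θ i1 ∪ sem θ i2
  | .loopX i1 => kleene concatS (sem θ i1)
  | .loopH i1 => kleene (restr (weakS θ)) (sem θ i1)
  | .loopS i1 => kleene (weakS θ) (sem θ i1)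
  | .loopP i1 => kleene interlS (sem θ i1)

/-- Termination predicate `i ↓`. -/
inductive Terminates : Interaction A → Prop
  | empty : Terminates .empty
  | alt_left {i1 i2 : Interaction A} : Terminates i1 → Terminates (.alt i1 i2)
  | alt_right {i1 i2 : Interaction A} : Terminates i2 → Terminates (.alt i1 i2)
  | strict {i1 i2 : Interaction A} : Terminates i1 → Terminates i2 → Terminates (.strict i1 i2)
  | seq {i1 i2 : Interaction A} : Terminates i1 → Terminates i2 → Terminates (.seq i1 i2)
  | par {i1 i2 : Interaction A} : Terminates i1 → Terminates i2 → Terminates (.par i1 i2)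
  | loopX (i1 : Interaction A) : Terminates (.loopX i1)
  | loopH (i1 : Interaction A) : Terminates (.loopH i1)
  | loopS (i1 : Interaction A) : Terminates (.loopS i1)
  | loopP (i1 : Interaction A) : Terminates (.loopP i1)

/-- Evasion predicate `i ↓w l`. -/
inductive Evades (θ : A → L) : Interaction A → L → Prop
  | empty (l : L) : Evades θ .empty l
  | act {a : A} {l : L} : θ a ≠ l → Evades θ (.act a) l
  | alt_left {i1 i2 : Interaction A} {l : L} : Evades θ i1 l → Evades θ (.alt i1 i2) l
  | alt_right {i1 i2 : Interaction A} {l : L} : Evades θ i2 l → Evades θ (.alt i1 i2) l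
  | strict {i1 i2 : Interaction A} {l : L} :
      Evades θ i1 l → Evades θ i2 l → Evades θ (.strict i1 i2) l
  | seq {i1 i2 : Interaction A} {l : L} :
      Evades θ i1 l → Evades θ i2 l → Evades θ (.seq i1 i2) l
  | par {i1 i2 : Interaction A} {l : L} :
      Evades θ i1 l → Evades θ i2 l → Evades θ (.par i1 i2) l
  | loopX (i1 : Interaction A) (l : L) : Evades θ (.loopX i1) l
  | loopH (i1 : Interaction A) (l : L) : Evades θ (.loopH i1) l
  | loopS (i1 : Interaction A) (l : L) : Evades θ (.loopS i1) l
  | loopP (i1 : Interaction A) (l : L) : Evades θ (.loopP i1) l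

/-- Pruning relation `i ⇝_l i'`. -/
inductive Prune (θ : A → L) (l : L) : Interaction A → Interaction A → Prop
  | empty : Prune θ l .empty .empty
  | act {a : A} : θ a ≠ l → Prune θ l (.act a) (.act a)
  | strict {i1 i2 i1' i2' : Interaction A} :
      Prune θ l i1 i1' → Prune θ l i2 i2' → Prune θ l (.strict i1 i2) (.strict i1' i2')
  | seq {i1 i2 i1' i2' : Interaction A} :
      Prune θ l i1 i1' → Prune θ l i2 i2' → Prune θ l (.seq i1 i2) (.seq i1' i2')
  | par {i1 i2 i1' i2' : Interaction A} :
      Prune θ l i1 i1' → Prune θ l i2 i2' → Prune θ l (.par i1 i2) (.par i1' i2')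
  | alt_both {i1 i2 i1' i2' : Interaction A} :
      Prune θ l i1 i1' → Prune θ l i2 i2' → Prune θ l (.alt i1 i2) (.alt i1' i2')
  | alt_left {i1 i2 i1' : Interaction A} :
      Prune θ l i1 i1' → ¬ Evades θ i2 l → Prune θ l (.alt i1 i2) i1'
  | alt_right {i1 i2 i2' : Interaction A} :
      Prune θ l i2 i2' → ¬ Evades θ i1 l → Prune θ l (.alt i1 i2) i2'
  | loopX {i1 i1' : Interaction A} : Prune θ l i1 i1' → Prune θ l (.loopX i1) (.loopX i1')
  | loopH {i1 i1' : Interaction A} : Prune θ l i1 i1' → Prune θ l (.loopH i1) (.loopH i1')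
  | loopS {i1 i1' : Interaction A} : Prune θ l i1 i1' → Prune θ l (.loopS i1) (.loopS i1')
  | loopP {i1 i1' : Interaction A} : Prune θ l i1 i1' → Prune θ l (.loopP i1) (.loopP i1')
  | loopX_elim {i1 : Interaction A} : ¬ Evades θ i1 l → Prune θ l (.loopX i1) .empty
  | loopH_elim {i1 : Interaction A} : ¬ Evades θ i1 l → Prune θ l (.loopH i1) .empty
  | loopS_elim {i1 : Interaction A} : ¬ Evades θ i1 l → Prune θ l (.loopS i1) .empty
  | loopP_elim {i1 : Interaction A} : ¬ Evades θ i1 l → Prune θ l (.loopP i1) .empty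

/-- Execution relation `i →a i'`. -/
inductive Exec (θ : A → L) : Interaction A → A → Interaction A → Prop
  | act (a : A) : Exec θ (.act a) a .empty
  | alt_left {i1 i2 i1' : Interaction A} {a : A} :
      Exec θ i1 a i1' → Exec θ (.alt i1 i2) a i1'
  | alt_right {i1 i2 i2' : Interaction A} {a : A} :
      Exec θ i2 a i2' → Exec θ (.alt i1 i2) a i2'
  | par_left {i1 i2 i1' : Interaction A} {a : A} :
      Exec θ i1 a i1' → Exec θ (.par i1 i2) a (.par i1' i2)
  | par_right {i1 i2 i2' : Interaction A} {a : A} :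
      Exec θ i2 a i2' → Exec θ (.par i1 i2) a (.par i1 i2')
  | strict_left {i1 i2 i1' : Interaction A} {a : A} :
      Exec θ i1 a i1' → Exec θ (.strict i1 i2) a (.strict i1' i2)
  | strict_right {i1 i2 i2' : Interaction A} {a : A} :
      Exec θ i2 a i2' → Terminates i1 → Exec θ (.strict i1 i2) a i2'
  | seq_left {i1 i2 i1' : Interaction A} {a : A} :
      Exec θ i1 a i1' → Exec θ (.seq i1 i2) a (.seq i1' i2)
  | seq_right {i1 i2 i1' i2' : Interaction A} {a : A} :
      Prune θ (θ a) i1 i1' → Exec θ i2 a i2' → Exec θ (.seq i1 i2) a (.seq i1' i2')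
  | loopX {i1 i1' : Interaction A} {a : A} :
      Exec θ i1 a i1' → Exec θ (.loopX i1) a (.strict i1' (.loopX i1))
  | loopH {i1 i1' : Interaction A} {a : A} :
      Exec θ i1 a i1' → Exec θ (.loopH i1) a (.seq i1' (.loopH i1))
  | loopS {i1 i1' i' : Interaction A} {a : A} :
      Exec θ i1 a i1' → Prune θ (θ a) (.loopS i1) i' →
      Exec θ (.loopS i1) a (.seq i' (.seq i1' (.loopS i1)))
  | loopP {i1 i1' : Interaction A} {a : A} :
      Exec θ i1 a i1' → Exec θ (.loopP i1) a (.par i1' (.loopP i1))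

/-- Operational semantics `σ_o`. -/
inductive SemO (θ : A → L) : Interaction A → List A → Prop
  | empty {i : Interaction A} : Terminates i → SemO θ i []
  | step {i i' : Interaction A} {a : A} {t : List A} :
      Exec θ i a i' → SemO θ i' t → SemO θ i (a :: t)


/-! Removing the traces that touch `l` commutes with every scheduling operator: concatenation,
weak sequencing and interleaving merge two traces without creating or losing actions, so a
merged trace avoids `l` iff both parts do. This passes to the restricted weak sequencing, to
powers and to Kleene closures. A term that does not evade `l` has no trace avoiding `l`, which
accounts for the dropped `alt` branches and for the loops pruned to `∅`, as the closure of the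
empty set is `{ε}`. Induction on the pruning derivation then gives the theorem. -/

section Pruning

variable {A : Type u} {L : Type v} {θ : A → L} {l : L}

theorem Interl.mem_iff {t1 t2 t : List A} (h : Interl t1 t2 t) (a : A) :
    a ∈ t ↔ a ∈ t1 ∨ a ∈ t2 := by
  induction h <;> simp [*, or_assoc, or_left_comm]

theorem WeakSeq.mem_iff {t1 t2 t : List A} (h : WeakSeq θ t1 t2 t) (a : A) :
    a ∈ t ↔ a ∈ t1 ∨ a ∈ t2 := by
  induction h <;> simp [*, or_assoc, or_left_comm]

theorem conflict_iff_of_mem_iff {t1 t2 t : List A} (h : ∀ a, a ∈ t ↔ a ∈ t1 ∨ a ∈ t2) :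
    Conflict θ t l ↔ Conflict θ t1 l ∨ Conflict θ t2 l := by
  simp only [Conflict, h, or_and_right, exists_or]

variable (θ l) in
def avoiding (T : Set (List A)) : Set (List A) :=
  {t ∈ T | ¬ Conflict θ t l}

@[simp]
theorem mem_avoiding {T : Set (List A)} {t : List A} :
    t ∈ avoiding θ l T ↔ t ∈ T ∧ ¬ Conflict θ t l :=
  Iff.rfl

theorem avoiding_singleton {t : List A} (h : ¬ Conflict θ t l) :
    avoiding θ l {t} = {t} := by
  ext s
  simp only [mem_avoiding, Set.mem_singleton_iff, and_iff_left_iff_imp]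
  rintro rfl
  exact h

theorem avoiding_union (T1 T2 : Set (List A)) :
    avoiding θ l (T1 ∪ T2) = avoiding θ l T1 ∪ avoiding θ l T2 :=
  Set.sep_union

theorem avoiding_merge (R : List A → List A → List A → Prop)
    (hR : ∀ {t1 t2 t}, R t1 t2 t → ∀ a, a ∈ t ↔ a ∈ t1 ∨ a ∈ t2)
    (T1 T2 : Set (List A)) :
    avoiding θ l {t | ∃ t1 ∈ T1, ∃ t2 ∈ T2, R t1 t2 t} =
      {t | ∃ t1 ∈ avoiding θ l T1, ∃ t2 ∈ avoiding θ l T2, R t1 t2 t} := by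
  ext t
  constructor
  · rintro ⟨⟨t1, h1, t2, h2, hR'⟩, hc⟩
    rw [conflict_iff_of_mem_iff (hR hR'), not_or] at hc
    exact ⟨t1, ⟨h1, hc.1⟩, t2, ⟨h2, hc.2⟩, hR'⟩
  · rintro ⟨t1, ⟨h1, hc1⟩, t2, ⟨h2, hc2⟩, hR'⟩
    refine ⟨⟨t1, h1, t2, h2, hR'⟩, ?_⟩
    rw [conflict_iff_of_mem_iff (hR hR')]
    exact not_or.2 ⟨hc1, hc2⟩

theorem avoiding_concatS (T1 T2 : Set (List A)) :
    avoiding θ l (concatS T1 T2) = concatS (avoiding θ l T1) (avoiding θ l T2) :=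
  avoiding_merge (fun t1 t2 t => t = t1 ++ t2) (fun h _ => h ▸ List.mem_append) T1 T2

theorem avoiding_weakS (T1 T2 : Set (List A)) :
    avoiding θ l (weakS θ T1 T2) = weakS θ (avoiding θ l T1) (avoiding θ l T2) :=
  avoiding_merge (WeakSeq θ) WeakSeq.mem_iff T1 T2

theorem avoiding_interlS (T1 T2 : Set (List A)) :
    avoiding θ l (interlS T1 T2) = interlS (avoiding θ l T1) (avoiding θ l T2) :=
  avoiding_merge Interl Interl.mem_iff T1 T2

theorem avoiding_restr_weakS (T1 T2 : Set (List A)) :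
    avoiding θ l (restr (weakS θ) T1 T2) =
      restr (weakS θ) (avoiding θ l T1) (avoiding θ l T2) := by
  ext t
  constructor
  · rintro ⟨⟨hw, hfirst⟩, hc⟩
    refine ⟨(avoiding_weakS T1 T2).subset ⟨hw, hc⟩, ?_⟩
    rintro a t' rfl
    obtain ⟨t1, ht1, hw1⟩ := hfirst a t' rfl
    obtain ⟨s, ⟨rfl, hs⟩, t2, ht2, hws⟩ := (avoiding_weakS {t1} T2).subset ⟨hw1, hc⟩
    have has : ¬ Conflict θ (a :: s) l := by
      rintro ⟨b, hb, rfl⟩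
      rcases List.mem_cons.1 hb with rfl | hb
      · exact hc ⟨b, List.mem_cons_self, rfl⟩
      · exact hs ⟨b, hb, rfl⟩
    exact ⟨s, ⟨ht1, has⟩, s, rfl, t2, ht2, hws⟩
  · rintro ⟨hw, hfirst⟩
    obtain ⟨hw, hc⟩ := (avoiding_weakS T1 T2).symm.subset hw
    refine ⟨⟨hw, ?_⟩, hc⟩
    rintro a t' rfl
    obtain ⟨t1, ⟨ht1, -⟩, s, hs, t2, ⟨ht2, -⟩, hws⟩ := hfirst a t' rfl
    exact ⟨t1, ht1, s, hs, t2, ht2, hws⟩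

section Closure

variable {op : Set (List A) → Set (List A) → Set (List A)}

theorem avoiding_power
    (hop : ∀ T1 T2, avoiding θ l (op T1 T2) = op (avoiding θ l T1) (avoiding θ l T2))
    (T : Set (List A)) : ∀ n, avoiding θ l (power op T n) = power op (avoiding θ l T) n
  | 0 => avoiding_singleton (by simp [Conflict])
  | n + 1 => by rw [power, power, hop, avoiding_power hop T n]

theorem avoiding_kleene
    (hop : ∀ T1 T2, avoiding θ l (op T1 T2) = op (avoiding θ l T1) (avoiding θ l T2))
    (T : Set (List A)) : avoiding θ l (kleene op T) = kleene op (avoiding θ l T) := by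
  ext t
  simp only [kleene, mem_avoiding, Set.mem_iUnion, ← avoiding_power hop]
  exact ⟨fun ⟨⟨n, hn⟩, hc⟩ => ⟨n, hn, hc⟩, fun ⟨n, hn, hc⟩ => ⟨⟨n, hn⟩, hc⟩⟩

theorem kleene_empty (hop : ∀ T, op ∅ T = ∅) : kleene op ∅ = {[]} := by
  refine (Set.iUnion_subset fun n => ?_).antisymm (Set.subset_iUnion_of_subset 0 le_rfl)
  cases n with
  | zero => exact le_rfl
  | succ n => simp only [power, hop, Set.empty_subset]

end Closure

theorem concatS_empty_left (T : Set (List A)) : concatS ∅ T = ∅ := by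
  simp [concatS]

theorem weakS_empty_left (T : Set (List A)) : weakS θ ∅ T = ∅ := by
  simp [weakS]

theorem interlS_empty_left (T : Set (List A)) : interlS ∅ T = ∅ := by
  simp [interlS]

theorem restr_weakS_empty_left (T : Set (List A)) : restr (weakS θ) ∅ T = ∅ := by
  simp [restr, weakS_empty_left]

theorem evades_of_mem_sem {i : Interaction A} {t : List A} (ht : t ∈ sem θ i)
    (hc : ¬ Conflict θ t l) : Evades θ i l := by
  induction i generalizing t with
  | empty => exact .empty l
  | act a =>
    obtain rfl : t = [a] := ht
    exact .act fun he => hc ⟨a, List.mem_singleton_self a, he⟩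
  | strict i1 i2 ih1 ih2 =>
    obtain ⟨t1, h1, t2, h2, -⟩ := (avoiding_concatS _ _).subset ⟨ht, hc⟩
    exact .strict (ih1 h1.1 h1.2) (ih2 h2.1 h2.2)
  | seq i1 i2 ih1 ih2 =>
    obtain ⟨t1, h1, t2, h2, -⟩ := (avoiding_weakS _ _).subset ⟨ht, hc⟩
    exact .seq (ih1 h1.1 h1.2) (ih2 h2.1 h2.2)
  | par i1 i2 ih1 ih2 =>
    obtain ⟨t1, h1, t2, h2, -⟩ := (avoiding_interlS _ _).subset ⟨ht, hc⟩
    exact .par (ih1 h1.1 h1.2) (ih2 h2.1 h2.2)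
  | alt i1 i2 ih1 ih2 =>
    exact ht.elim (fun h => .alt_left (ih1 h hc)) (fun h => .alt_right (ih2 h hc))
  | loopX i1 => exact .loopX i1 l
  | loopH i1 => exact .loopH i1 l
  | loopS i1 => exact .loopS i1 l
  | loopP i1 => exact .loopP i1 l

theorem avoiding_sem_eq_empty {i : Interaction A} (h : ¬ Evades θ i l) :
    avoiding θ l (sem θ i) = ∅ :=
  Set.eq_empty_of_forall_notMem fun _ ht => h (evades_of_mem_sem ht.1 ht.2)

end Pruning

theorem prune_sem {A : Type u} {L : Type v} (θ : A → L) (l : L)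
    {i i' : Interaction A} (h : Prune θ l i i') :
    sem θ i' = {t ∈ sem θ i | ¬ Conflict θ t l} := by
  change sem θ i' = avoiding θ l (sem θ i)
  induction h with
  | empty => exact (avoiding_singleton (by simp [Conflict])).symm
  | act hne => exact (avoiding_singleton (by simpa [Conflict] using hne)).symm
  | strict _ _ ih1 ih2 => simp only [sem, ih1, ih2, avoiding_concatS]
  | seq _ _ ih1 ih2 => simp only [sem, ih1, ih2, avoiding_weakS]
  | par _ _ ih1 ih2 => simp only [sem, ih1, ih2, avoiding_interlS]
  | alt_both _ _ ih1 ih2 => simp only [sem, ih1, ih2, avoiding_union]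
  | alt_left _ hev ih => rw [ih, sem, avoiding_union, avoiding_sem_eq_empty hev, Set.union_empty]
  | alt_right _ hev ih => rw [ih, sem, avoiding_union, avoiding_sem_eq_empty hev, Set.empty_union]
  | loopX _ ih => simp only [sem, ih, avoiding_kleene avoiding_concatS]
  | loopH _ ih => simp only [sem, ih, avoiding_kleene avoiding_restr_weakS]
  | loopS _ ih => simp only [sem, ih, avoiding_kleene avoiding_weakS]
  | loopP _ ih => simp only [sem, ih, avoiding_kleene avoiding_interlS]
  | loopX_elim hev =>
    rw [sem, sem, avoiding_kleene avoiding_concatS, avoiding_sem_eq_empty hev,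
      kleene_empty concatS_empty_left]
  | loopH_elim hev =>
    rw [sem, sem, avoiding_kleene avoiding_restr_weakS, avoiding_sem_eq_empty hev,
      kleene_empty restr_weakS_empty_left]
  | loopS_elim hev =>
    rw [sem, sem, avoiding_kleene avoiding_weakS, avoiding_sem_eq_empty hev,
      kleene_empty weakS_empty_left]
  | loopP_elim hev =>
    rw [sem, sem, avoiding_kleene avoiding_interlS, avoiding_sem_eq_empty hev,
      kleene_empty interlS_empty_left]
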